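/- Let S be a (−1,−1)-balanced Freudenthal Kantor triple system over a field F of characteristic ≠ 2 and let e ∈ S with ⟨e|e⟩ ≠ 0. Define x·y := ⟨e|e⟩⁻¹ exy and x̄ := (2⟨e|x⟩/⟨e|e⟩)e − x. Then (S,·) is flexible ((x·y)·x = x·(y·x)), satisfies the Jordan identity ((x·y)·(x·x) = x·(y·(x·x))), and every operator D_{x,y} := L_{[x,y]} − [L_x,L_y] (computed in (S,·)) is a derivation of (S,·); that is, (S,·) belongs to the variety 𝒱. Moreover, the original triple product satisfies xyz = ⟨e|e⟩·((x̄·y)·z − x̄·(y·z) + y·(x̄·z)) for all x, y, z ∈ S. -/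
import Mathlib


/-- The binary product `x·y := ⟨e|e⟩⁻¹ exy` on a `(−1,−1)`-balanced Freudenthal
Kantor triple system. -/
noncomputable def bmul {F S : Type*} [Field F] [AddCommGroup S] [Module F S]
    (T : S →ₗ[F] S →ₗ[F] S →ₗ[F] S) (B : S →ₗ[F] S →ₗ[F] F) (e x y : S) : S :=
  (B e e)⁻¹ • T e x y

/-- The standard involution `x̄ := (2⟨e|x⟩/⟨e|e⟩)e − x` of the quadratic algebra
`(S,·)`. -/
noncomputable def bbar {F S : Type*} [Field F] [AddCommGroup S] [Module F S]
    (B : S →ₗ[F] S →ₗ[F] F) (e x : S) : S :=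
  (2 * B e x / B e e) • e - x

/-- The operator `D_{x,y} = L_{[x,y]} − [L_x,L_y]` of `(S,·)` applied to `c`. -/
noncomputable def bDer {F S : Type*} [Field F] [AddCommGroup S] [Module F S]
    (T : S →ₗ[F] S →ₗ[F] S →ₗ[F] S) (B : S →ₗ[F] S →ₗ[F] F) (e x y c : S) : S :=
  bmul T B e (bmul T B e x y - bmul T B e y x) c -
    (bmul T B e x (bmul T B e y c) - bmul T B e y (bmul T B e x c))

set_option maxHeartbeats 2000000

/-- Let `S` be a `(−1,−1)`-balanced Freudenthal Kantor triple system over a field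
of characteristic `≠ 2` and `e ∈ S` with `⟨e|e⟩ ≠ 0`.  With `x·y := ⟨e|e⟩⁻¹ exy`
and `x̄ := (2⟨e|x⟩/⟨e|e⟩)e − x`, the algebra `(S,·)` is flexible, satisfies the
Jordan identity, every `D_{x,y}` is a derivation of `(S,·)` (so `(S,·)` is in the
variety `𝒱`), and the original triple product satisfies
`xyz = ⟨e|e⟩((x̄·y)·z − x̄·(y·z) + y·(x̄·z))`. -/
theorem stmt13 {F S : Type*} [Field F] [AddCommGroup S] [Module F S]
    (hchar : (2 : F) ≠ 0)
    (T : S →ₗ[F] S →ₗ[F] S →ₗ[F] S) (B : S →ₗ[F] S →ₗ[F] F)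
    (hBsym : ∀ x y : S, B x y = B y x) (hBne : B ≠ 0)
    (gjts : ∀ u v x y z : S,
      T u v (T x y z) = T (T u v x) y z - T x (T v u y) z + T x y (T u v z))
    (hxxy : ∀ x y : S, T x x y = B x x • y)
    (hxyx : ∀ x y : S, T x y x = B x x • y)
    (e : S) (he : B e e ≠ 0) :
    (∀ x y : S, bmul T B e (bmul T B e x y) x = bmul T B e x (bmul T B e y x)) ∧
    (∀ x y : S, bmul T B e (bmul T B e x y) (bmul T B e x x) =
      bmul T B e x (bmul T B e y (bmul T B e x x))) ∧
    (∀ x y a b : S,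
      bDer T B e x y (bmul T B e a b) =
        bmul T B e (bDer T B e x y a) b + bmul T B e a (bDer T B e x y b)) ∧
    (∀ x y z : S,
      T x y z = B e e •
        (bmul T B e (bmul T B e (bbar B e x) y) z -
          bmul T B e (bbar B e x) (bmul T B e y z) +
          bmul T B e y (bmul T B e (bbar B e x) z))) := by
  have he0 : e ≠ 0 := fun h0 => he (by rw [h0]; simp)
  have A1 : ∀ a b c : S, T a b c + T c b a = (2 * B a c) • b := by
    intro a b c
    have h := hxyx (a + c) b
    simp only [map_add, LinearMap.add_apply, hxyx] at h
    rw [hBsym c a] at h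
    linear_combination (norm := module) h
  have A2 : ∀ a b c : S, T a b c + T b a c = (2 * B a b) • c := by
    intro a b c
    have h := hxxy (a + b) c
    simp only [map_add, LinearMap.add_apply, hxxy] at h
    rw [hBsym b a] at h
    linear_combination (norm := module) h
  have A4 : ∀ u v a : S, B (T u v a) a = B u v * B a a := by
    intro u v a
    have h := gjts u v a a e
    simp only [hxxy, map_smul, LinearMap.smul_apply] at h
    have h1 : T (T u v a) a e = T a (T v u a) e := by
      linear_combination (norm := module) -h
    have h3 : T v u a = (2 * B u v) • a - T u v a := by
      linear_combination (norm := module) A2 u v a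
    rw [h3] at h1
    simp only [map_sub, map_smul, LinearMap.sub_apply, LinearMap.smul_apply, hxxy] at h1
    have h2 := A2 (T u v a) a e
    have h4 : (2 * B (T u v a) a) • e = (2 * (B u v * B a a)) • e := by
      linear_combination (norm := module) h1 - h2
    have h5 := smul_left_injective F he0 h4
    exact mul_left_cancel₀ hchar h5
  have A5 : ∀ u v a c : S, B (T u v a) c + B (T u v c) a = 2 * B u v * B a c := by
    intro u v a c
    have h := A4 u v (a + c)
    simp only [map_add, LinearMap.add_apply] at h
    linear_combination h - A4 u v a - A4 u v c + B u v * hBsym c a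
  have A6s : ∀ a b : S, B e (T e a b) = 2 * B e a * B e b - B e e * B a b := by
    intro a b
    have h := A5 e a b e
    rw [hxyx e a] at h
    simp only [map_smul, LinearMap.smul_apply, smul_eq_mul] at h
    linear_combination h - hBsym (T e a b) e + 2 * B e a * hBsym b e
  have A6v : ∀ w z : S, T e w z =
      (2 * B e w) • z - (2 * B w z) • e + (2 * B e z) • w - T e z w := by
    intro w z
    have h1 := A2 e w z
    have h2 := A1 w e z
    have h3 := A2 z e w
    rw [hBsym z e] at h3
    linear_combination (norm := module) h1 - h2 + h3
  have rexx : ∀ a : S, T e a a = (2 * B e a) • a - (B a a) • e := by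
    intro a
    have h := A1 e a a
    rw [hxxy] at h
    linear_combination (norm := module) h
  have A9 : ∀ x y : S, B (T e x y) x = B x x * B e y := by
    intro x y
    have h := A5 e x y x
    rw [rexx x] at h
    simp only [map_sub, map_smul, LinearMap.sub_apply, LinearMap.smul_apply, smul_eq_mul] at h
    linear_combination h + 2 * B e x * hBsym y x
  have Hiv : ∀ v w a b : S, T e v (T w a b) =
      T (T e v w) a b - (2 * B e v) • T w a b + T w (T e v a) b + T w a (T e v b) := by
    intro v w a b
    have h := gjts e v w a b
    have h2 : T v e a = (2 * B e v) • a - T e v a := by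
      have h3 := A2 v e a
      rw [hBsym v e] at h3
      linear_combination (norm := module) h3
    rw [h2] at h
    simp only [map_sub, map_smul, LinearMap.sub_apply, LinearMap.smul_apply] at h
    linear_combination (norm := module) h
  have KeyC : ∀ a b c : S, T e a (T e b c) =
      (B e e) • T a b c - (2 * B e a) • T e b c + T e (T e a b) c + T e b (T e a c) := by
    intro a b c
    have h := Hiv a e b c
    rw [hxyx e a] at h
    simp only [map_smul, LinearMap.smul_apply] at h
    linear_combination (norm := module) h
  have G1 : ∀ x y : S, T e (T e x y) x = T e x (T e y x) := by
    intro x y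
    have h := A6v (T e x y) x
    rw [A6s x y, A9 x y] at h
    have h3 := congrArg (T e x) (A6v x y)
    simp only [map_sub, map_add, map_smul] at h3
    rw [hxyx e x, rexx x] at h3
    linear_combination (norm := module) h - h3
  have G2 : ∀ x y : S, T e (T e x y) (T e x x) = T e x (T e y (T e x x)) := by
    intro x y
    rw [rexx x]
    simp only [map_sub, map_smul, LinearMap.sub_apply, LinearMap.smul_apply, hxyx]
    linear_combination (norm := module) (2 * B e x) • G1 x y
  have GD : ∀ x y a b : S,
      (T e (T e x y) (T e a b) - T e (T e y x) (T e a b))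
        - (T e x (T e y (T e a b)) - T e y (T e x (T e a b)))
      = T e ((T e (T e x y) a - T e (T e y x) a) - (T e x (T e y a) - T e y (T e x a))) b
        + T e a ((T e (T e x y) b - T e (T e y x) b) - (T e x (T e y b) - T e y (T e x b))) := by
    intro x y a b
    have hyx : ∀ c : S, T y x c = (2 * B x y) • c - T x y c := fun c => by
      linear_combination (norm := module) A2 x y c
    have hswapyx : T e y x = (2 * B e y) • x - (2 * B x y) • e + (2 * B e x) • y - T e x y := by
      have h := A6v y x
      rw [hBsym y x] at h
      exact h
    have hN : ∀ c : S, T e (T e x y) c =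
        T e x (T e y c) - T e y (T e x c) - (B e e) • T x y c + (2 * B e x) • T e y c := by
      intro c; linear_combination (norm := module) - KeyC x y c
    have hN' : ∀ c : S, T e (T e y x) c =
        T e y (T e x c) - T e x (T e y c) - (B e e) • T y x c + (2 * B e y) • T e x c := by
      intro c; linear_combination (norm := module) - KeyC y x c
    have e1 : T x y e = (2 * B e x) • y - T e y x := by
      have h := A1 x y e
      rw [hBsym x e] at h
      linear_combination (norm := module) h
    have hE := gjts x y e a b
    rw [e1, hyx a, hswapyx] at hE
    simp only [map_add, map_sub, map_smul, LinearMap.add_apply, LinearMap.sub_apply,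
      LinearMap.smul_apply] at hE
    have hXY := Hiv x y a b
    have hYX := Hiv y x a b
    rw [hswapyx] at hYX
    simp only [map_add, map_sub, map_smul, LinearMap.add_apply, LinearMap.sub_apply,
      LinearMap.smul_apply] at hYX
    rw [hN (T e a b), hN' (T e a b), hN a, hN' a, hN b, hN' b]
    rw [hyx (T e a b), hyx a, hyx b]
    simp only [map_add, map_sub, map_smul, LinearMap.add_apply, LinearMap.sub_apply,
      LinearMap.smul_apply]
    rw [hE, KeyC y a b, KeyC x a b]
    simp only [map_add, map_sub, map_smul, LinearMap.add_apply, LinearMap.sub_apply,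
      LinearMap.smul_apply]
    rw [KeyC y a b, KeyC x a b, hXY, hYX]
    rw [KeyC x (T e y a) b, KeyC x a (T e y b), KeyC y (T e x a) b, KeyC y a (T e x b)]
    module
  refine ⟨?_, ?_, ?_, ?_⟩
  · intro x y
    simp only [bmul, map_smul, LinearMap.smul_apply]
    linear_combination (norm := module) ((B e e)⁻¹ * (B e e)⁻¹) • G1 x y
  · intro x y
    simp only [bmul, map_smul, LinearMap.smul_apply]
    linear_combination (norm := module) ((B e e)⁻¹ * ((B e e)⁻¹ * (B e e)⁻¹)) • G2 x y
  · intro x y a b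
    have h := GD x y a b
    simp only [map_add, map_sub, map_smul, LinearMap.add_apply, LinearMap.sub_apply,
      LinearMap.smul_apply] at h
    simp only [bDer, bmul, map_add, map_sub, map_smul, LinearMap.add_apply, LinearMap.sub_apply,
      LinearMap.smul_apply]
    linear_combination (norm := module) ((B e e)⁻¹ * ((B e e)⁻¹ * (B e e)⁻¹)) • h
  · intro x y z
    have hbar : ∀ w : S, T e (bbar B e x) w = (2 * B e x) • w - T e x w := by
      intro w
      simp only [bbar, map_sub, map_smul, LinearMap.sub_apply, LinearMap.smul_apply, hxxy,
        smul_smul, div_mul_cancel₀ _ he]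
    simp only [bmul, map_smul, LinearMap.smul_apply, hbar]
    simp only [map_sub, map_smul, LinearMap.sub_apply, LinearMap.smul_apply]
    linear_combination (norm := (match_scalars <;> field_simp <;> ring1)) (-(B e e)⁻¹) • KeyC x y z
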